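/- Let A be an antilattice po-group satisfying RDP, and let a₁,a₂,b₁,b₂ ∈ A⁺ satisfy a₁+a₂ = b₁+b₂ with a₁ and b₁ non-comparable. Then (1) there exists an RDP decomposition n₁₁,n₁₂,n₂₁,n₂₂ ∈ A⁺ (a₁ = n₁₁+n₁₂, a₂ = n₂₁+n₂₂, b₁ = n₁₁+n₂₁, b₂ = n₁₂+n₂₂) with n₁₂ > 0, n₂₁ > 0 and n₁₂, n₂₁ non-comparable; and (2) every RDP decomposition m₁₁,m₁₂,m₂₁,m₂₂ ∈ A⁺ of this equation has m₁₂ > 0 and m₂₁ > 0. -/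

import Mathlib

/-- A po-group satisfies RDP if every equation `a₁ + a₂ = b₁ + b₂` of positive elements
admits a Riesz decomposition by four positive elements. -/
def RDP (G : Type*) [AddGroup G] [PartialOrder G] : Prop :=
  ∀ a₁ a₂ b₁ b₂ : G, 0 ≤ a₁ → 0 ≤ a₂ → 0 ≤ b₁ → 0 ≤ b₂ → a₁ + a₂ = b₁ + b₂ →
    ∃ c₁₁ c₁₂ c₂₁ c₂₂ : G, 0 ≤ c₁₁ ∧ 0 ≤ c₁₂ ∧ 0 ≤ c₂₁ ∧ 0 ≤ c₂₂ ∧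
      a₁ = c₁₁ + c₁₂ ∧ a₂ = c₂₁ + c₂₂ ∧ b₁ = c₁₁ + c₂₁ ∧ b₂ = c₁₂ + c₂₂

/-- A poset is an antilattice if only comparable pairs of elements have a join or a meet. -/
def IsAntilattice (P : Type*) [PartialOrder P] : Prop :=
  ∀ a b : P, ((∃ c, IsLUB {a, b} c) ∨ (∃ c, IsGLB {a, b} c)) → (a ≤ b ∨ b ≤ a)

/-!
Take any Riesz decomposition of `a₁ + a₂ = b₁ + b₂`; one exists by RDP. Since `a₁ = n₁₁ + n₁₂` and
`b₁ = n₁₁ + n₂₁` share the summand `n₁₁` on the left, comparability of `n₁₂` and `n₂₁` would make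
`a₁` and `b₁` comparable. So in *every* decomposition `n₁₂ ∥ n₂₁`, and two incomparable positive
elements are both nonzero.
-/

section

variable {A : Type*}

theorem IncompRel.of_add_left [Add A] [Preorder A] [AddLeftMono A] {c x y : A}
    (h : IncompRel (· ≤ ·) (c + x) (c + y)) : IncompRel (· ≤ ·) x y :=
  ⟨fun hxy => h.not_le (add_le_add_right hxy c), fun hyx => h.not_ge (add_le_add_right hyx c)⟩

theorem IncompRel.pos_of_nonneg [Zero A] [Preorder A] {x y : A} (h : IncompRel (· ≤ ·) x y)
    (hx : 0 ≤ x) (hy : 0 ≤ y) : 0 < x ∧ 0 < y :=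
  ⟨hx.lt_of_not_ge fun hx0 => h.not_le (hx0.trans hy),
    hy.lt_of_not_ge fun hy0 => h.not_ge (hy0.trans hx)⟩

end

theorem antilattice_rdp_decomposition_general {A : Type*} [AddGroup A] [PartialOrder A]
    [CovariantClass A A (· + ·) (· ≤ ·)]
    (hA : RDP A)
    (a₁ a₂ b₁ b₂ : A) (ha₁ : 0 ≤ a₁) (ha₂ : 0 ≤ a₂) (hb₁ : 0 ≤ b₁) (hb₂ : 0 ≤ b₂)
    (heq : a₁ + a₂ = b₁ + b₂) (hnc : ¬ a₁ ≤ b₁ ∧ ¬ b₁ ≤ a₁) :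
    (∃ n₁₁ n₁₂ n₂₁ n₂₂ : A, 0 ≤ n₁₁ ∧ 0 ≤ n₁₂ ∧ 0 ≤ n₂₁ ∧ 0 ≤ n₂₂ ∧
      a₁ = n₁₁ + n₁₂ ∧ a₂ = n₂₁ + n₂₂ ∧ b₁ = n₁₁ + n₂₁ ∧ b₂ = n₁₂ + n₂₂ ∧
      0 < n₁₂ ∧ 0 < n₂₁ ∧ ¬ n₁₂ ≤ n₂₁ ∧ ¬ n₂₁ ≤ n₁₂) ∧
    (∀ m₁₁ m₁₂ m₂₁ m₂₂ : A, 0 ≤ m₁₁ → 0 ≤ m₁₂ → 0 ≤ m₂₁ → 0 ≤ m₂₂ →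
      a₁ = m₁₁ + m₁₂ → a₂ = m₂₁ + m₂₂ → b₁ = m₁₁ + m₂₁ → b₂ = m₁₂ + m₂₂ →
      0 < m₁₂ ∧ 0 < m₂₁) := by
  have off_diagonal_incomp {m₁₁ m₁₂ m₂₁ : A} (e₁ : a₁ = m₁₁ + m₁₂) (e₃ : b₁ = m₁₁ + m₂₁) :
      IncompRel (· ≤ ·) m₁₂ m₂₁ := by
    subst e₁ e₃
    exact IncompRel.of_add_left hnc
  obtain ⟨c₁₁, c₁₂, c₂₁, c₂₂, h₁₁, h₁₂, h₂₁, h₂₂, e₁, e₂, e₃, e₄⟩ :=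
    hA a₁ a₂ b₁ b₂ ha₁ ha₂ hb₁ hb₂ heq
  have hinc := off_diagonal_incomp e₁ e₃
  obtain ⟨p₁₂, p₂₁⟩ := hinc.pos_of_nonneg h₁₂ h₂₁
  refine ⟨⟨c₁₁, c₁₂, c₂₁, c₂₂, h₁₁, h₁₂, h₂₁, h₂₂, e₁, e₂, e₃, e₄, p₁₂, p₂₁, hinc.1, hinc.2⟩, ?_⟩
  intro m₁₁ m₁₂ m₂₁ m₂₂ _ h₁₂ h₂₁ _ e₁ _ e₃ _
  exact (off_diagonal_incomp e₁ e₃).pos_of_nonneg h₁₂ h₂₁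

/-- In an antilattice po-group `A` with RDP, if `a₁ + a₂ = b₁ + b₂` with
`a₁, a₂, b₁, b₂ ≥ 0` and `a₁ ∥ b₁` (non-comparable), then (1) there is an RDP
decomposition `n₁₁, n₁₂, n₂₁, n₂₂` with `n₁₂ > 0`, `n₂₁ > 0` and `n₁₂ ∥ n₂₁`; and
(2) every RDP decomposition `m₁₁, m₁₂, m₂₁, m₂₂` of this equation has `m₁₂ > 0` and
`m₂₁ > 0`. -/
theorem antilattice_rdp_decomposition {A : Type*} [AddGroup A] [PartialOrder A]
    [CovariantClass A A (· + ·) (· ≤ ·)]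
    [CovariantClass A A (Function.swap (· + ·)) (· ≤ ·)]
    (hanti : IsAntilattice A) (hA : RDP A)
    (a₁ a₂ b₁ b₂ : A) (ha₁ : 0 ≤ a₁) (ha₂ : 0 ≤ a₂) (hb₁ : 0 ≤ b₁) (hb₂ : 0 ≤ b₂)
    (heq : a₁ + a₂ = b₁ + b₂) (hnc : ¬ a₁ ≤ b₁ ∧ ¬ b₁ ≤ a₁) :
    (∃ n₁₁ n₁₂ n₂₁ n₂₂ : A, 0 ≤ n₁₁ ∧ 0 ≤ n₁₂ ∧ 0 ≤ n₂₁ ∧ 0 ≤ n₂₂ ∧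
      a₁ = n₁₁ + n₁₂ ∧ a₂ = n₂₁ + n₂₂ ∧ b₁ = n₁₁ + n₂₁ ∧ b₂ = n₁₂ + n₂₂ ∧
      0 < n₁₂ ∧ 0 < n₂₁ ∧ ¬ n₁₂ ≤ n₂₁ ∧ ¬ n₂₁ ≤ n₁₂) ∧
    (∀ m₁₁ m₁₂ m₂₁ m₂₂ : A, 0 ≤ m₁₁ → 0 ≤ m₁₂ → 0 ≤ m₂₁ → 0 ≤ m₂₂ →
      a₁ = m₁₁ + m₁₂ → a₂ = m₂₁ + m₂₂ → b₁ = m₁₁ + m₂₁ → b₂ = m₁₂ + m₂₂ →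
      0 < m₁₂ ∧ 0 < m₂₁) :=
  antilattice_rdp_decomposition_general hA a₁ a₂ b₁ b₂ ha₁ ha₂ hb₁ hb₂ heq hnc
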